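/- arXiv:hep-th/0301200 — 6 statements merged into one kernel-verified Lean document; each statement's English description precedes it below -/
import Mathlib

section
/- For admissible pairs (I,m) and (J,n), the canonical Poisson bracket of the monomials L^I_m and L^J_n is given by {L^I_m, L^J_n} = i Σ_{α=1}^N Λ_{αα} (I_α n_α − J_α m_α) · L^{I+J−δ_α}_{m+n}, where δ_α ∈ ℤ^N is the α-th standard unit vector. Moreover, whenever the coefficient I_α n_α − J_α m_α is nonzero, the pair (I+J−δ_α, m+n) is automatically admissible (summands with zero coefficient are omitted). This is the 'generalized w_∞(N₊,N₋)' algebra of the paper (eq. (31)). -/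
/-!
STATEMENT 0: The generalized w_∞(N₊,N₋) algebra (eq. (31) of the paper):
for admissible pairs (I,m), (J,n),
{L^I_m, L^J_n} = i Σ_α Λ_{αα} (I_α n_α − J_α m_α) L^{I+J−δ_α}_{m+n},
and nonzero coefficients force admissibility of (I+J−δ_α, m+n).
-/

open MvPolynomial Finset

noncomputable section

/-- The diagonal entry `Λ_{αα}` of the pseudo-unitary metric, as a complex number:
`+1` for the first `N₊` indices, `−1` for the last `N₋`. -/
def Lam (Np Nm : ℕ) (α : Fin (Np + Nm)) : ℂ := if (α : ℕ) < Np then 1 else -1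

/-- The commutative polynomial ring `R = ℂ[a_1,…,a_N, ā_1,…,ā_N]`;
the variable `Sum.inl α` is `a_α` and `Sum.inr α` is `ā_α`. -/
abbrev OscRing (N : ℕ) := MvPolynomial (Fin N ⊕ Fin N) ℂ

/-- The canonical Poisson bracket
`{f,g} := i Σ_α Λ_{αα} (∂f/∂a_α · ∂g/∂ā_α − ∂f/∂ā_α · ∂g/∂a_α)`. -/
def poisson (Np Nm : ℕ) (f g : OscRing (Np + Nm)) : OscRing (Np + Nm) :=
  Complex.I • ∑ α : Fin (Np + Nm), Lam Np Nm α •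
    (pderiv (Sum.inl α) f * pderiv (Sum.inr α) g -
     pderiv (Sum.inr α) f * pderiv (Sum.inl α) g)

/-- `m_α := Σ_{β>α} m_{αβ} − Σ_{β<α} m_{βα}`. -/
def mvec {N : ℕ} (m : Fin N → Fin N → ℤ) (α : Fin N) : ℤ :=
  (∑ β, if α < β then m α β else 0) - (∑ β, if β < α then m β α else 0)

/-- `(I,m)` is admissible if `I_α + m_α/2` and `I_α − m_α/2` are nonnegative integers
for every `α`. -/
def Admissible {N : ℕ} (I : Fin N → ℚ) (m : Fin N → Fin N → ℤ) : Prop :=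
  ∀ α, (∃ p : ℕ, I α + (mvec m α : ℚ) / 2 = p) ∧ (∃ q : ℕ, I α - (mvec m α : ℚ) / 2 = q)

/-- The exponent `I_α + m_α/2` of `ā_α` (as a natural number, for admissible pairs). -/
def expP {N : ℕ} (I : Fin N → ℚ) (m : Fin N → Fin N → ℤ) (α : Fin N) : ℕ :=
  (I α + (mvec m α : ℚ) / 2).num.toNat

/-- The exponent `I_α − m_α/2` of `a_α` (as a natural number, for admissible pairs). -/
def expQ {N : ℕ} (I : Fin N → ℚ) (m : Fin N → Fin N → ℤ) (α : Fin N) : ℕ :=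
  (I α - (mvec m α : ℚ) / 2).num.toNat

/-- The monomial `L^I_m := Π_α ā_α^{I_α+m_α/2} a_α^{I_α−m_α/2}`. -/
def Lmon {N : ℕ} (I : Fin N → ℚ) (m : Fin N → Fin N → ℤ) : OscRing N :=
  ∏ α, X (Sum.inr α) ^ expP I m α * X (Sum.inl α) ^ expQ I m α

namespace WInf
variable {N : ℕ}

def dvec (q p : Fin N → ℕ) : (Fin N ⊕ Fin N) →₀ ℕ :=
  Finsupp.equivFunOnFinite.symm (Sum.elim q p)

@[simp] lemma dvec_inl (q p : Fin N → ℕ) (β : Fin N) : dvec q p (Sum.inl β) = q β := rfl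
@[simp] lemma dvec_inr (q p : Fin N → ℕ) (β : Fin N) : dvec q p (Sum.inr β) = p β := rfl

lemma prod_monomial {ι : Type*} (s : Finset ι) (f : ι → ((Fin N ⊕ Fin N) →₀ ℕ)) :
    ∏ i ∈ s, (monomial (f i) (1:ℂ)) = monomial (∑ i ∈ s, f i) 1 := by
  induction s using Finset.cons_induction with
  | empty => simp
  | cons a s ha ih => simp [Finset.prod_cons, Finset.sum_cons, ih]

lemma Lmon_eq (I : Fin N → ℚ) (m : Fin N → Fin N → ℤ) :
    Lmon I m = monomial (dvec (expQ I m) (expP I m)) (1:ℂ) := by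
  unfold Lmon
  have h : ∀ α ∈ Finset.univ, X (Sum.inr α) ^ expP I m α * X (Sum.inl α) ^ expQ I m α
      = monomial (Finsupp.single (Sum.inr α) (expP I m α)
          + Finsupp.single (Sum.inl α) (expQ I m α)) (1:ℂ) := by
    intro α _
    rw [X_pow_eq_monomial, X_pow_eq_monomial, monomial_mul, one_mul]
  rw [Finset.prod_congr rfl h, prod_monomial]
  have key : (∑ α, (Finsupp.single (Sum.inr α) (expP I m α)
      + Finsupp.single (Sum.inl α) (expQ I m α))) = dvec (expQ I m) (expP I m) := by
    ext s
    rcases s with β | β <;>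
      simp [Finsupp.finset_sum_apply, Finsupp.single_apply]
  rw [key]

lemma toNat_cast (k : ℕ) : ((k:ℚ)).num.toNat = k := by simp

lemma expP_eq {I : Fin N → ℚ} {m : Fin N → Fin N → ℤ} (hIm : Admissible I m) (α : Fin N) :
    (expP I m α : ℚ) = I α + (mvec m α : ℚ)/2 := by
  obtain ⟨p, hp⟩ := (hIm α).1
  have : expP I m α = p := by rw [expP, hp]; simp
  rw [this, hp]

lemma expQ_eq {I : Fin N → ℚ} {m : Fin N → Fin N → ℤ} (hIm : Admissible I m) (α : Fin N) :
    (expQ I m α : ℚ) = I α - (mvec m α : ℚ)/2 := by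
  obtain ⟨q, hq⟩ := (hIm α).2
  have : expQ I m α = q := by rw [expQ, hq]; simp
  rw [this, hq]

lemma mvec_add (m n : Fin N → Fin N → ℤ) (α : Fin N) :
    mvec (fun β γ => m β γ + n β γ) α = mvec m α + mvec n α := by
  simp only [mvec]
  have h1 : ∀ (f g : Fin N → ℤ) (P : Fin N → Prop) [DecidablePred P],
      ∑ β, (if P β then f β + g β else 0)
        = (∑ β, if P β then f β else 0) + (∑ β, if P β then g β else 0) := by
    intro f g P _
    rw [← Finset.sum_add_distrib]
    exact Finset.sum_congr rfl (by intros; split <;> simp)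
  rw [h1, h1]
  ring

variable {I J : Fin N → ℚ} {m n : Fin N → Fin N → ℤ}

lemma newP_val (hIm : Admissible I m) (hJn : Admissible J n) (α : Fin N)
    (hp : 1 ≤ expP I m α + expP J n α) (β : Fin N) :
    (I β + J β - if β = α then 1 else 0) + (mvec (fun β γ => m β γ + n β γ) β : ℚ)/2
      = ((expP I m β + expP J n β - (if β = α then 1 else 0) : ℕ) : ℚ) := by
  have h1 := expP_eq hIm β
  have h2 := expP_eq hJn β
  rw [mvec_add]
  by_cases h : β = α
  · subst h
    rw [if_pos rfl, if_pos rfl, Nat.cast_sub hp]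
    push_cast
    push_cast at h1 h2
    linarith
  · rw [if_neg h, if_neg h]
    simp only [Nat.sub_zero]
    push_cast
    push_cast at h1 h2
    linarith

lemma newQ_val (hIm : Admissible I m) (hJn : Admissible J n) (α : Fin N)
    (hq : 1 ≤ expQ I m α + expQ J n α) (β : Fin N) :
    (I β + J β - if β = α then 1 else 0) - (mvec (fun β γ => m β γ + n β γ) β : ℚ)/2
      = ((expQ I m β + expQ J n β - (if β = α then 1 else 0) : ℕ) : ℚ) := by
  have h1 := expQ_eq hIm β
  have h2 := expQ_eq hJn β
  rw [mvec_add]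
  by_cases h : β = α
  · subst h
    rw [if_pos rfl, if_pos rfl, Nat.cast_sub hq]
    push_cast
    push_cast at h1 h2
    linarith
  · rw [if_neg h, if_neg h]
    simp only [Nat.sub_zero]
    push_cast
    push_cast at h1 h2
    linarith

lemma expP_new (hIm : Admissible I m) (hJn : Admissible J n) (α : Fin N)
    (hp : 1 ≤ expP I m α + expP J n α) (β : Fin N) :
    expP (fun β => I β + J β - if β = α then 1 else 0) (fun β γ => m β γ + n β γ) β
      = expP I m β + expP J n β - (if β = α then 1 else 0) := by
  conv_lhs => rw [expP]
  rw [newP_val hIm hJn α hp β, toNat_cast]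

lemma expQ_new (hIm : Admissible I m) (hJn : Admissible J n) (α : Fin N)
    (hq : 1 ≤ expQ I m α + expQ J n α) (β : Fin N) :
    expQ (fun β => I β + J β - if β = α then 1 else 0) (fun β γ => m β γ + n β γ) β
      = expQ I m β + expQ J n β - (if β = α then 1 else 0) := by
  conv_lhs => rw [expQ]
  rw [newQ_val hIm hJn α hq β, toNat_cast]

lemma dvec_sub_add₁ (p q p' q' : Fin N → ℕ) (α : Fin N) (h1 : 1 ≤ q α) (h2 : 1 ≤ p' α) :
    (dvec q p - Finsupp.single (Sum.inl α) 1) + (dvec q' p' - Finsupp.single (Sum.inr α) 1)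
      = dvec (fun β => q β + q' β - if β = α then 1 else 0)
             (fun β => p β + p' β - if β = α then 1 else 0) := by
  ext s
  rcases s with β | β <;>
  · simp only [Finsupp.add_apply, Finsupp.tsub_apply, Finsupp.single_apply, dvec_inl, dvec_inr]
    by_cases h : β = α
    · subst h; simp; omega
    · have h' : ¬ α = β := fun hh => h hh.symm
      simp [h, h']

lemma dvec_sub_add₂ (p q p' q' : Fin N → ℕ) (α : Fin N) (h1 : 1 ≤ p α) (h2 : 1 ≤ q' α) :
    (dvec q p - Finsupp.single (Sum.inr α) 1) + (dvec q' p' - Finsupp.single (Sum.inl α) 1)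
      = dvec (fun β => q β + q' β - if β = α then 1 else 0)
             (fun β => p β + p' β - if β = α then 1 else 0) := by
  ext s
  rcases s with β | β <;>
  · simp only [Finsupp.add_apply, Finsupp.tsub_apply, Finsupp.single_apply, dvec_inl, dvec_inr]
    by_cases h : β = α
    · subst h; simp; omega
    · have h' : ¬ α = β := fun hh => h hh.symm
      simp [h, h']

lemma claim1 (p q p' q' : Fin N → ℕ) (α : Fin N) :
    monomial (dvec q p - Finsupp.single (Sum.inl α) 1) ((q α : ℂ))
      * monomial (dvec q' p' - Finsupp.single (Sum.inr α) 1) ((p' α : ℂ))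
    = monomial (dvec (fun β => q β + q' β - if β = α then 1 else 0)
        (fun β => p β + p' β - if β = α then 1 else 0)) (((q α * p' α : ℕ)) : ℂ) := by
  rw [monomial_mul]
  by_cases h1 : q α = 0
  · simp [h1]
  by_cases h2 : p' α = 0
  · simp [h2]
  rw [dvec_sub_add₁ p q p' q' α (Nat.one_le_iff_ne_zero.2 h1) (Nat.one_le_iff_ne_zero.2 h2)]
  push_cast
  ring_nf

lemma claim2 (p q p' q' : Fin N → ℕ) (α : Fin N) :
    monomial (dvec q p - Finsupp.single (Sum.inr α) 1) ((p α : ℂ))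
      * monomial (dvec q' p' - Finsupp.single (Sum.inl α) 1) ((q' α : ℂ))
    = monomial (dvec (fun β => q β + q' β - if β = α then 1 else 0)
        (fun β => p β + p' β - if β = α then 1 else 0)) (((p α * q' α : ℕ)) : ℂ) := by
  rw [monomial_mul]
  by_cases h1 : p α = 0
  · simp [h1]
  by_cases h2 : q' α = 0
  · simp [h2]
  rw [dvec_sub_add₂ p q p' q' α (Nat.one_le_iff_ne_zero.2 h1) (Nat.one_le_iff_ne_zero.2 h2)]
  push_cast
  ring_nf

end WInf

open WInf

theorem generalized_w_infinity_poisson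
    (Np Nm : ℕ) (hN : 1 ≤ Np + Nm)
    (I J : Fin (Np + Nm) → ℚ) (m n : Fin (Np + Nm) → Fin (Np + Nm) → ℤ)
    (hI : ∀ α, ∃ k : ℕ, I α = (k : ℚ) / 2) (hJ : ∀ α, ∃ k : ℕ, J α = (k : ℚ) / 2)
    (hm : ∀ α β, ¬ α < β → m α β = 0) (hn : ∀ α β, ¬ α < β → n α β = 0)
    (hIm : Admissible I m) (hJn : Admissible J n) :
    (poisson Np Nm (Lmon I m) (Lmon J n) =
      Complex.I • ∑ α : Fin (Np + Nm),
        (Lam Np Nm α * ((I α * (mvec n α : ℚ) - J α * (mvec m α : ℚ) : ℚ) : ℂ)) •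
          Lmon (fun β => I β + J β - if β = α then 1 else 0)
               (fun β γ => m β γ + n β γ)) ∧
    (∀ α : Fin (Np + Nm),
      I α * (mvec n α : ℚ) - J α * (mvec m α : ℚ) ≠ 0 →
      Admissible (fun β => I β + J β - if β = α then 1 else 0)
                 (fun β γ => m β γ + n β γ)) := by
  -- key rational coefficient identity
  have hQ : ∀ α, (expQ I m α : ℚ) * expP J n α - expP I m α * expQ J n α
      = I α * mvec n α - J α * mvec m α := by
    intro α
    rw [expQ_eq hIm, expP_eq hJn, expP_eq hIm, expQ_eq hJn]
    ring
  -- nonzero coefficient forces positivity of summed exponents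
  have hposP : ∀ α, I α * mvec n α - J α * mvec m α ≠ 0 →
      1 ≤ expP I m α + expP J n α := by
    intro α hc0
    by_contra h
    push_neg at h
    have h1 : expP I m α = 0 := by omega
    have h2 : expP J n α = 0 := by omega
    apply hc0
    rw [← hQ α, h1, h2]
    push_cast
    ring
  have hposQ : ∀ α, I α * mvec n α - J α * mvec m α ≠ 0 →
      1 ≤ expQ I m α + expQ J n α := by
    intro α hc0
    by_contra h
    push_neg at h
    have h1 : expQ I m α = 0 := by omega
    have h2 : expQ J n α = 0 := by omega
    apply hc0
    rw [← hQ α, h1, h2]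
    push_cast
    ring
  constructor
  · unfold poisson
    rw [Lmon_eq I m, Lmon_eq J n]
    congr 1
    apply Finset.sum_congr rfl
    intro α _
    rw [pderiv_monomial, pderiv_monomial, pderiv_monomial, pderiv_monomial]
    simp only [one_mul, dvec_inl, dvec_inr]
    rw [claim1 (expP I m) (expQ I m) (expP J n) (expQ J n) α,
        claim2 (expP I m) (expQ I m) (expP J n) (expQ J n) α,
        ← map_sub]
    have hc : ((expQ I m α * expP J n α : ℕ) : ℂ) - ((expP I m α * expQ J n α : ℕ) : ℂ)
        = ((I α * mvec n α - J α * mvec m α : ℚ) : ℂ) := by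
      have := congrArg (fun x : ℚ => (x : ℂ)) (hQ α)
      push_cast at this ⊢
      linear_combination this
    rw [hc, Lmon_eq, smul_monomial, smul_monomial, smul_eq_mul, smul_eq_mul, mul_one]
    by_cases hc0 : I α * mvec n α - J α * mvec m α = 0
    · rw [hc0]
      simp
    · have hEP := expP_new hIm hJn α (hposP α hc0)
      have hEQ := expQ_new hIm hJn α (hposQ α hc0)
      congr 1
      exact congrArg monomial (congrArg₂ dvec (funext fun β => (hEQ β).symm) (funext fun β => (hEP β).symm))
  · intro α hc0 β
    constructor
    · exact ⟨_, newP_val hIm hJn α (hposP α hc0) β⟩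
    · exact ⟨_, newQ_val hIm hJn α (hposQ α hc0) β⟩
end
end

section
/- For all integers I, J ≥ 0 and m, n with |m| ≤ I and |n| ≤ J, the Poisson bracket of the functions L^I_m and L^J_n satisfies {L^I_m, L^J_n} = i(Jm − In) · L^{I+J−1}_{m+n}, with the convention that the right-hand side is 0 when Jm − In = 0; whenever Jm − In ≠ 0, the label (I+J−1, m+n) automatically satisfies I+J−1 ≥ 0 and |m+n| ≤ I+J−1, so the right-hand side is well defined. (This is the classical one-boson w_∞ algebra of conformal-spin currents, eq. (18) of the paper; the stated bracket convention fixes the overall sign.) -/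
/-!
STATEMENT 4: The classical one-boson w_∞ algebra (eq. (18) of the paper):
{L^I_m, L^J_n} = i(Jm − In) L^{I+J−1}_{m+n} for the currents
L^I_m := ½ ā^{I−m} a^{I+m}, |m| ≤ I, with the stated conventions.
-/

open MvPolynomial

noncomputable section

/-- The polynomial ring `ℂ[a, ā]`; `false ↦ a`, `true ↦ ā`. -/
abbrev OneBosonRing := MvPolynomial Bool ℂ

/-- The Poisson bracket `{f,g} := i(∂f/∂a · ∂g/∂ā − ∂f/∂ā · ∂g/∂a)`. -/
def pb (f g : OneBosonRing) : OneBosonRing :=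
  Complex.I • (pderiv false f * pderiv true g - pderiv true f * pderiv false g)

/-- The higher-spin current `L^I_m := ½ ā^{I−m} a^{I+m}`. -/
def Lcur (I : ℕ) (m : ℤ) : OneBosonRing :=
  (2 : ℂ)⁻¹ • (X true ^ ((I : ℤ) - m).toNat * X false ^ ((I : ℤ) + m).toNat)

/-
Each current is an eigenvector of both Euler operators `a ∂_a` and `ā ∂_ā`, with eigenvalues
`I + m` and `I - m`. Multiplying the bracket by `ā a` turns it into these Euler operators, so
`{L^I_m, L^J_n} ā a = i((I + m)(J - n) - (I - m)(J + n)) L^I_m L^J_n = i(Jm - In) L^{I+J}_{m+n}`.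
Cancelling `ā a` in the domain `ℂ[a, ā]` then gives the bracket, and sidesteps the truncated
exponents that the derivatives of monomials produce.
-/

theorem X_mul_pderiv_X_pow {R σ : Type*} [CommSemiring R] (i : σ) (n : ℕ) :
    X i * pderiv i (X i ^ n : MvPolynomial σ R) = n • X i ^ n := by
  classical
  rw [X_pow_eq_monomial, X_mul_pderiv_monomial, Finsupp.single_eq_same]

theorem X_mul_pderiv_X_pow_mul_X_pow {R σ : Type*} [CommSemiring R] {i j : σ} (h : j ≠ i)
    (A B : ℕ) :
    X i * pderiv i (X j ^ A * X i ^ B : MvPolynomial σ R) = B • (X j ^ A * X i ^ B) := by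
  rw [pderiv_mul, pderiv_pow, pderiv_X_of_ne h, mul_zero, zero_mul, zero_add, mul_left_comm,
    X_mul_pderiv_X_pow, mul_smul_comm]

theorem Int.cast_toNat_of_nonneg {R : Type*} [Ring R] {t : ℤ} (ht : 0 ≤ t) :
    ((t.toNat : ℕ) : R) = t := by
  rw [← Int.cast_natCast, Int.toNat_of_nonneg ht]

theorem abs_add_le_add_sub_one_of_mul_sub_mul_ne_zero {I J m n : ℤ} (hm : |m| ≤ I) (hn : |n| ≤ J)
    (h : J * m - I * n ≠ 0) : |m + n| ≤ I + J - 1 := by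
  rw [abs_le] at *
  constructor <;> by_contra hc <;> apply h
  · obtain ⟨rfl, rfl⟩ : m = -I ∧ n = -J := by omega
    ring
  · obtain ⟨rfl, rfl⟩ : m = I ∧ n = J := by omega
    ring

theorem pb_mul_X_mul_X_of_euler {f g : OneBosonRing} {α β γ δ : ℂ}
    (hfa : X false * pderiv false f = α • f) (hfā : X true * pderiv true f = β • f)
    (hga : X false * pderiv false g = γ • g) (hgā : X true * pderiv true g = δ • g) :
    pb f g * (X true * X false) = (Complex.I * (α * δ - β * γ)) • (f * g) := by
  calc pb f g * (X true * X false)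
      = Complex.I • ((X false * pderiv false f) * (X true * pderiv true g)
          - (X true * pderiv true f) * (X false * pderiv false g)) := by
        rw [pb, smul_mul_assoc]; congr 1; ring
    _ = (Complex.I * (α * δ - β * γ)) • (f * g) := by
        rw [hfa, hfā, hga, hgā, smul_mul_smul_comm, smul_mul_smul_comm, ← sub_smul, smul_smul]

section Lcur

variable {I J : ℕ} {m n : ℤ}

theorem X_false_mul_pderiv_false_Lcur (hm : |m| ≤ I) :
    X false * pderiv false (Lcur I m) = ((I : ℂ) + m) • Lcur I m := by
  rw [Lcur, Derivation.map_smul, mul_smul_comm, X_mul_pderiv_X_pow_mul_X_pow (by decide), smul_comm,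
    ← Nat.cast_smul_eq_nsmul ℂ, Int.cast_toNat_of_nonneg (by rw [abs_le] at hm; omega)]
  push_cast; rfl

theorem X_true_mul_pderiv_true_Lcur (hm : |m| ≤ I) :
    X true * pderiv true (Lcur I m) = ((I : ℂ) - m) • Lcur I m := by
  rw [Lcur, Derivation.map_smul, mul_smul_comm, mul_comm (X true ^ _),
    X_mul_pderiv_X_pow_mul_X_pow (by decide), smul_comm,
    ← Nat.cast_smul_eq_nsmul ℂ, Int.cast_toNat_of_nonneg (by rw [abs_le] at hm; omega)]
  push_cast; rfl

theorem Lcur_mul_Lcur (hm : |m| ≤ I) (hn : |n| ≤ J) :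
    Lcur I m * Lcur J n = (2 : ℂ)⁻¹ • Lcur (I + J) (m + n) := by
  rw [abs_le] at hm hn
  have hā : ((I + J : ℕ) - (m + n) : ℤ).toNat = ((I : ℤ) - m).toNat + ((J : ℤ) - n).toNat := by
    omega
  have ha : ((I + J : ℕ) + (m + n) : ℤ).toNat = ((I : ℤ) + m).toNat + ((J : ℤ) + n).toNat := by
    omega
  rw [Lcur, Lcur, Lcur, hā, ha, smul_mul_smul_comm, pow_add, pow_add, smul_smul]
  ring_nf

theorem Lcur_mul_X_mul_X (hm : |m| ≤ I) : Lcur I m * (X true * X false) = Lcur (I + 1) m := by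
  rw [abs_le] at hm
  have hā : ((I + 1 : ℕ) - m : ℤ).toNat = ((I : ℤ) - m).toNat + 1 := by omega
  have ha : ((I + 1 : ℕ) + m : ℤ).toNat = ((I : ℤ) + m).toNat + 1 := by omega
  rw [Lcur, Lcur, hā, ha, smul_mul_assoc, pow_succ, pow_succ]
  ring_nf

theorem pb_Lcur_mul_X_mul_X (hm : |m| ≤ I) (hn : |n| ≤ J) :
    pb (Lcur I m) (Lcur J n) * (X true * X false) =
      (Complex.I * ((J : ℂ) * m - (I : ℂ) * n)) • Lcur (I + J) (m + n) := by
  rw [pb_mul_X_mul_X_of_euler (X_false_mul_pderiv_false_Lcur hm) (X_true_mul_pderiv_true_Lcur hm)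
    (X_false_mul_pderiv_false_Lcur hn) (X_true_mul_pderiv_true_Lcur hn), Lcur_mul_Lcur hm hn,
    smul_smul]
  congr 1
  ring

end Lcur

theorem one_boson_w_infinity (I J : ℕ) (m n : ℤ)
    (hm : |m| ≤ (I : ℤ)) (hn : |n| ≤ (J : ℤ)) :
    pb (Lcur I m) (Lcur J n) =
      (Complex.I * ((J : ℂ) * (m : ℂ) - (I : ℂ) * (n : ℂ))) • Lcur (I + J - 1) (m + n) ∧
    ((J : ℤ) * m - (I : ℤ) * n ≠ 0 →
      1 ≤ I + J ∧ |m + n| ≤ (I : ℤ) + (J : ℤ) - 1) := by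
  have labels (h : (J : ℤ) * m - (I : ℤ) * n ≠ 0) : 1 ≤ I + J ∧ |m + n| ≤ (I : ℤ) + J - 1 := by
    have hmn := abs_add_le_add_sub_one_of_mul_sub_mul_ne_zero hm hn h
    exact ⟨by have := abs_nonneg (m + n); omega, hmn⟩
  refine ⟨mul_right_cancel₀ (mul_ne_zero (X_ne_zero true) (X_ne_zero false)) ?_, labels⟩
  rw [pb_Lcur_mul_X_mul_X hm hn, smul_mul_assoc]
  by_cases h : (J : ℤ) * m - (I : ℤ) * n = 0
  · have hC : (J : ℂ) * m - (I : ℂ) * n = 0 := by exact_mod_cast h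
    rw [hC, mul_zero, zero_smul, zero_smul]
  · obtain ⟨hIJ, hmn⟩ := labels h
    rw [Lcur_mul_X_mul_X (by rwa [Nat.cast_sub hIJ, Nat.cast_one]), Nat.sub_add_cancel hIJ]
end
end

section
/- For all indices α, β, α₁, β₁, α₂, β₂ ∈ {1,…,N}, the Poisson–Lie bracket of a coordinate x_{αβ} with a null-type polynomial is again a combination of null-type polynomials; precisely: {x_{αβ}, x_{α₁β₁α₂β₂}}_PL = i Λ_{α₁β} x_{αβ₁α₂β₂} − i Λ_{αβ₁} x_{α₁βα₂β₂} + i Λ_{α₂β} x_{α₁β₁αβ₂} − i Λ_{αβ₂} x_{α₁β₁α₂β}. -/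
/-!
STATEMENT 5: The Poisson–Lie bracket of a coordinate x_{αβ} with a null-type
polynomial is again a combination of null-type polynomials:
{x_{αβ}, x_{α₁β₁α₂β₂}}_PL = iΛ_{α₁β} x_{αβ₁α₂β₂} − iΛ_{αβ₁} x_{α₁βα₂β₂}
 + iΛ_{α₂β} x_{α₁β₁αβ₂} − iΛ_{αβ₂} x_{α₁β₁α₂β}.
-/

open MvPolynomial Finset

noncomputable section

/-- The entries `Λ_{μν}` of the pseudo-unitary metric (diagonal, ±1). -/
def LamE (Np Nm : ℕ) (μ ν : Fin (Np + Nm)) : ℂ :=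
  if μ = ν then (if (μ : ℕ) < Np then (1 : ℂ) else -1) else 0

/-- The polynomial ring `S = ℂ[x_{αβ} : α,β = 1,…,N]`. -/
abbrev CoalgRing (N : ℕ) := MvPolynomial (Fin N × Fin N) ℂ

/-- The Poisson–Lie bracket
`{f,g}_PL := i Σ (Λ_{α₂β₁} x_{α₁β₂} − Λ_{α₁β₂} x_{α₂β₁}) ∂f/∂x_{α₁β₁} ∂g/∂x_{α₂β₂}`. -/
def pbLie (Np Nm : ℕ) (f g : CoalgRing (Np + Nm)) : CoalgRing (Np + Nm) :=
  Complex.I • ∑ a1 : Fin (Np + Nm), ∑ b1 : Fin (Np + Nm),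
    ∑ a2 : Fin (Np + Nm), ∑ b2 : Fin (Np + Nm),
      (C (LamE Np Nm a2 b1) * X (a1, b2) - C (LamE Np Nm a1 b2) * X (a2, b1)) *
        pderiv (a1, b1) f * pderiv (a2, b2) g

/-- The null-type polynomial `x_{α₁β₁α₂β₂} := x_{α₁β₁}x_{α₂β₂} − x_{α₁β₂}x_{α₂β₁}`. -/
def nullp {N : ℕ} (a1 b1 a2 b2 : Fin N) : CoalgRing N :=
  X (a1, b1) * X (a2, b2) - X (a1, b2) * X (a2, b1)


lemma sum_delta {N : ℕ} (F : Fin N → Fin N → CoalgRing N) (p q : Fin N) :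
    ∑ A, ∑ B, F A B * (if (p, q) = (A, B) then (1:CoalgRing N) else 0) = F p q := by
  classical
  simp [Prod.mk.injEq, mul_ite, ite_and]

theorem poissonLie_coordinate_nullpoly
    (Np Nm : ℕ) (hN : 1 ≤ Np + Nm) (α β a1 b1 a2 b2 : Fin (Np + Nm)) :
    pbLie Np Nm (X (α, β)) (nullp a1 b1 a2 b2) =
      Complex.I • (C (LamE Np Nm a1 β) * nullp α b1 a2 b2)
      - Complex.I • (C (LamE Np Nm α b1) * nullp a1 β a2 b2)
      + Complex.I • (C (LamE Np Nm a2 β) * nullp a1 b1 α b2)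
      - Complex.I • (C (LamE Np Nm α b2) * nullp a1 b1 a2 β) := by
  classical
  -- Step 1: collapse the first two sums using pderiv of X(α,β)
  have step1 : pbLie Np Nm (X (α, β)) (nullp a1 b1 a2 b2) =
      Complex.I • ∑ A : Fin (Np+Nm), ∑ B : Fin (Np+Nm),
        (C (LamE Np Nm A β) * X (α, B) - C (LamE Np Nm α B) * X (A, β)) *
          pderiv (A, B) (nullp a1 b1 a2 b2) := by
    rw [pbLie]
    congr 1
    rw [Finset.sum_eq_single α]
    · rw [Finset.sum_eq_single β]
      · refine Finset.sum_congr rfl fun A _ => Finset.sum_congr rfl fun B _ => ?_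
        rw [pderiv_X_self, mul_one]
      · intro x _ hx
        refine Finset.sum_eq_zero fun A _ => Finset.sum_eq_zero fun B _ => ?_
        rw [pderiv_X_of_ne (by intro h; exact hx (congrArg Prod.snd h).symm)]
        ring
      · intro h; exact absurd (Finset.mem_univ β) h
    · intro x _ hx
      refine Finset.sum_eq_zero fun b' _ => Finset.sum_eq_zero fun A _ =>
        Finset.sum_eq_zero fun B _ => ?_
      rw [pderiv_X_of_ne (by intro h; exact hx (congrArg Prod.fst h).symm)]
      ring
    · intro h; exact absurd (Finset.mem_univ α) h
  rw [step1]
  -- Step 2: compute pderiv of the null polynomial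
  have hp : ∀ A B : Fin (Np+Nm), pderiv (A, B) (nullp a1 b1 a2 b2) =
      (if (a1, b1) = (A, B) then 1 else 0) * X (a2, b2)
      + X (a1, b1) * (if (a2, b2) = (A, B) then 1 else 0)
      - ((if (a1, b2) = (A, B) then 1 else 0) * X (a2, b1)
      + X (a1, b2) * (if (a2, b1) = (A, B) then 1 else 0)) := by
    intro A B
    simp only [nullp, map_sub, pderiv_mul, pderiv_X, Pi.single_apply, Prod.mk.injEq, ite_and, mul_ite, mul_one, mul_zero, ite_mul, one_mul, zero_mul]
  -- Step 3: collapse the remaining double sum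
  have step2 : (∑ A : Fin (Np+Nm), ∑ B : Fin (Np+Nm),
        (C (LamE Np Nm A β) * X (α, B) - C (LamE Np Nm α B) * X (A, β)) *
          pderiv (A, B) (nullp a1 b1 a2 b2)) =
      (C (LamE Np Nm a1 β) * X (α, b1) - C (LamE Np Nm α b1) * X (a1, β)) * X (a2, b2)
      + (C (LamE Np Nm a2 β) * X (α, b2) - C (LamE Np Nm α b2) * X (a2, β)) * X (a1, b1)
      - ((C (LamE Np Nm a1 β) * X (α, b2) - C (LamE Np Nm α b2) * X (a1, β)) * X (a2, b1)
      + (C (LamE Np Nm a2 β) * X (α, b1) - C (LamE Np Nm α b1) * X (a2, β)) * X (a1, b2)) := by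
    have expand : ∀ A B : Fin (Np+Nm),
        (C (LamE Np Nm A β) * X (α, B) - C (LamE Np Nm α B) * X (A, β)) *
          pderiv (A, B) (nullp a1 b1 a2 b2) =
        ((C (LamE Np Nm A β) * X (α, B) - C (LamE Np Nm α B) * X (A, β)) * X (a2, b2)) *
          (if (a1, b1) = (A, B) then 1 else 0)
        + ((C (LamE Np Nm A β) * X (α, B) - C (LamE Np Nm α B) * X (A, β)) * X (a1, b1)) *
          (if (a2, b2) = (A, B) then 1 else 0)
        - (((C (LamE Np Nm A β) * X (α, B) - C (LamE Np Nm α B) * X (A, β)) * X (a2, b1)) *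
          (if (a1, b2) = (A, B) then 1 else 0)
        + ((C (LamE Np Nm A β) * X (α, B) - C (LamE Np Nm α B) * X (A, β)) * X (a1, b2)) *
          (if (a2, b1) = (A, B) then 1 else 0)) := by
      intro A B; rw [hp A B]; ring
    simp only [expand, Finset.sum_add_distrib, Finset.sum_sub_distrib]
    rw [sum_delta (fun A B => (C (LamE Np Nm A β) * X (α, B) - C (LamE Np Nm α B) * X (A, β)) * X (a2, b2)),
        sum_delta (fun A B => (C (LamE Np Nm A β) * X (α, B) - C (LamE Np Nm α B) * X (A, β)) * X (a1, b1)),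
        sum_delta (fun A B => (C (LamE Np Nm A β) * X (α, B) - C (LamE Np Nm α B) * X (A, β)) * X (a2, b1)),
        sum_delta (fun A B => (C (LamE Np Nm A β) * X (α, B) - C (LamE Np Nm α B) * X (A, β)) * X (a1, b2))]
  rw [step2]
  simp only [nullp, smul_eq_C_mul]
  ring
end
end

section
/- The ideal I of S generated by all the null-type polynomials x_{α₁β₁α₂β₂} (α₁,β₁,α₂,β₂ ∈ {1,…,N}) is a Poisson ideal for the Poisson–Lie bracket: for every f ∈ S and every h ∈ I, the bracket {f, h}_PL again belongs to I. Consequently the quotient S/I inherits a Poisson bracket from {·,·}_PL. -/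
/-!
For fixed `f`, `g ↦ {f, g}_PL` is a derivation of `S`, so it preserves the ideal generated by a
set as soon as it maps the generators into that ideal. On a coordinate,
`{f, x_{pq}} = i Σ_{a,b} (Λ_{pb} x_{aq} − Λ_{aq} x_{pb}) ∂f/∂x_{ab}`, and the Leibniz rule turns
`{f, x_{pqrs}}` into `i Σ_{a,b} ∂f/∂x_{ab}` times
`Λ_{pb} x_{aqrs} + Λ_{rb} x_{aspq} − Λ_{aq} x_{pbrs} − Λ_{as} x_{rbpq}`.
-/

open MvPolynomial Finset

noncomputable section

/-- The ideal of `S` generated by all null-type polynomials. -/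
def nullIdeal (N : ℕ) : Ideal (CoalgRing N) :=
  Ideal.span {p : CoalgRing N | ∃ a1 b1 a2 b2 : Fin N, p = nullp a1 b1 a2 b2}

theorem Derivation.map_mem_span_of_forall_mem {R A : Type*} [CommSemiring R] [CommSemiring A]
    [Algebra R A] (D : Derivation R A A) {s : Set A} (hs : ∀ x ∈ s, D x ∈ Ideal.span s)
    {x : A} (hx : x ∈ Ideal.span s) : D x ∈ Ideal.span s := by
  induction hx using Submodule.span_induction with
  | mem x hx => exact hs x hx
  | zero => simp
  | add x y _ _ hx hy => simpa using add_mem hx hy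
  | smul a x hx hDx =>
    rw [smul_eq_mul, D.leibniz, smul_eq_mul, smul_eq_mul]
    exact add_mem (Ideal.mul_mem_left _ _ hDx) (Ideal.mul_mem_right _ _ hx)

theorem Derivation.sum_apply {R A M ι : Type*} [CommSemiring R] [CommSemiring A] [Algebra R A]
    [AddCommMonoid M] [Module A M] [Module R M] (t : Finset ι) (D : ι → Derivation R A M)
    (a : A) : (∑ i ∈ t, D i) a = ∑ i ∈ t, D i a :=
  (congrFun (map_sum Derivation.coeFnAddMonoidHom D t) a).trans (Finset.sum_apply a t _)

lemma nullp_mem_nullIdeal {N : ℕ} (a b c d : Fin N) : nullp a b c d ∈ nullIdeal N :=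
  Ideal.subset_span ⟨a, b, c, d, rfl⟩

section PoissonLie

variable (Np Nm : ℕ)

def pbLieDerivation (f : CoalgRing (Np + Nm)) :
    Derivation ℂ (CoalgRing (Np + Nm)) (CoalgRing (Np + Nm)) :=
  Complex.I • ∑ a1 : Fin (Np + Nm), ∑ b1 : Fin (Np + Nm),
    ∑ a2 : Fin (Np + Nm), ∑ b2 : Fin (Np + Nm),
      ((C (LamE Np Nm a2 b1) * X (a1, b2) - C (LamE Np Nm a1 b2) * X (a2, b1)) *
        pderiv (a1, b1) f) • pderiv (a2, b2)

lemma pbLieDerivation_apply (f g : CoalgRing (Np + Nm)) :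
    pbLieDerivation Np Nm f g = pbLie Np Nm f g := by
  simp [pbLieDerivation, pbLie, Derivation.sum_apply]

lemma pbLie_X (f : CoalgRing (Np + Nm)) (p q : Fin (Np + Nm)) :
    pbLie Np Nm f (X (p, q)) = C Complex.I * ∑ a : Fin (Np + Nm), ∑ b : Fin (Np + Nm),
      (C (LamE Np Nm p b) * X (a, q) - C (LamE Np Nm a q) * X (p, b)) * pderiv (a, b) f := by
  simp [pbLie, pderiv_X, Pi.single_apply, ite_and, smul_eq_C_mul]

lemma pbLie_nullp (f : CoalgRing (Np + Nm)) (p q r s : Fin (Np + Nm)) :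
    pbLie Np Nm f (nullp p q r s) = C Complex.I * ∑ a : Fin (Np + Nm), ∑ b : Fin (Np + Nm),
      (C (LamE Np Nm p b) * nullp a q r s + C (LamE Np Nm r b) * nullp a s p q
        - C (LamE Np Nm a q) * nullp p b r s - C (LamE Np Nm a s) * nullp r b p q) *
        pderiv (a, b) f := by
  rw [← pbLieDerivation_apply, nullp, map_sub, Derivation.leibniz, Derivation.leibniz]
  simp only [pbLieDerivation_apply, pbLie_X, smul_eq_mul, Finset.mul_sum,
    ← Finset.sum_add_distrib, ← Finset.sum_sub_distrib]
  refine Finset.sum_congr rfl fun a _ => Finset.sum_congr rfl fun b _ => ?_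
  simp only [nullp]
  ring

lemma pbLie_nullp_mem_nullIdeal (f : CoalgRing (Np + Nm)) (p q r s : Fin (Np + Nm)) :
    pbLie Np Nm f (nullp p q r s) ∈ nullIdeal (Np + Nm) := by
  rw [pbLie_nullp]
  refine Ideal.mul_mem_left _ _ (Ideal.sum_mem _ fun a _ => Ideal.sum_mem _ fun b _ => ?_)
  refine Ideal.mul_mem_right _ _ (sub_mem (sub_mem (add_mem ?_ ?_) ?_) ?_) <;>
    exact Ideal.mul_mem_left _ _ (nullp_mem_nullIdeal _ _ _ _)

end PoissonLie

theorem nullIdeal_is_poisson_ideal_general (Np Nm : ℕ) :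
    ∀ f h : CoalgRing (Np + Nm), h ∈ nullIdeal (Np + Nm) →
      pbLie Np Nm f h ∈ nullIdeal (Np + Nm) := by
  intro f h hh
  rw [← pbLieDerivation_apply]
  refine Derivation.map_mem_span_of_forall_mem _ ?_ hh
  rintro _ ⟨p, q, r, s, rfl⟩
  rw [pbLieDerivation_apply]
  exact pbLie_nullp_mem_nullIdeal Np Nm f p q r s

theorem nullIdeal_is_poisson_ideal (Np Nm : ℕ) (hN : 1 ≤ Np + Nm) :
    ∀ f h : CoalgRing (Np + Nm), h ∈ nullIdeal (Np + Nm) →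
      pbLie Np Nm f h ∈ nullIdeal (Np + Nm) :=
  nullIdeal_is_poisson_ideal_general Np Nm
end
end

section
/- Assume m, n ∈ ℤ^N satisfy the divergence-free constraints Σ_{α=1}^N m_α = 0 and Σ_{α=1}^N n_α = 0, and write m̃_j := m_j − m_{j+1}, ñ_j := n_j − n_{j+1}. Then, as operators on smooth functions ℝ^N → ℂ, the following commutation relations hold: (i) [T̃^j_m, T̃^k_n] = −i( m̃_k T̃^j_{m+n} − ñ_j T̃^k_{m+n} ) for 1 ≤ j, k ≤ N−1; (ii) [T̃^j_m, T̃^N_n] = i ñ_j T̃^N_{m+n} for 1 ≤ j ≤ N−1; (iii) [T̃^N_m, T̃^N_n] = 0; where [A,B]f := A(Bf) − B(Af). Thus the 'temporal' generators T̃^N span an Abelian ideal on which the 'spatial' diffeomorphisms T̃^j act semi-directly (eq. (38) of the paper, in the compact realization). -/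
/-!
STATEMENT 11: Splitting of the divergence-free diffeomorphism algebra into
"spatial" generators T̃^j_m = D^j_m − D^{j+1}_m and the Abelian "temporal" ideal
T̃^N_m = Σ_α D^α_m (eq. (38) of the paper, compact realization):
(i)  [T̃^j_m, T̃^k_n] = −i(m̃_k T̃^j_{m+n} − ñ_j T̃^k_{m+n}),
(ii) [T̃^j_m, T̃^N_n] = i ñ_j T̃^N_{m+n},
(iii)[T̃^N_m, T̃^N_n] = 0,
for m, n ∈ ℤ^N with Σ m_α = 0 = Σ n_α, where m̃_j = m_j − m_{j+1}.
-/

open scoped BigOperators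

noncomputable section

/-- The plane-wave basis vector field `(D^α_m f)(y) := e^{i m·y} (∂f/∂y_α)(y)`. -/
def Dop {N : ℕ} (m : Fin N → ℤ) (α : Fin N) (f : (Fin N → ℝ) → ℂ) : (Fin N → ℝ) → ℂ :=
  fun y => Complex.exp (Complex.I * ∑ β, (m β : ℂ) * (y β : ℂ)) *
    fderiv ℝ f y (Pi.single α 1)

/-- The spatial generator `T̃^j_m := D^j_m − D^{j+1}_m`, `j = 1, …, N−1`. -/
def Tsp {M : ℕ} (m : Fin (M + 1) → ℤ) (j : Fin M)
    (f : (Fin (M + 1) → ℝ) → ℂ) : (Fin (M + 1) → ℝ) → ℂ :=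
  fun y => Dop m j.castSucc f y - Dop m j.succ f y

/-- The temporal generator `T̃^N_m := Σ_{α=1}^N D^α_m`. -/
def Ttm {M : ℕ} (m : Fin (M + 1) → ℤ)
    (f : (Fin (M + 1) → ℝ) → ℂ) : (Fin (M + 1) → ℝ) → ℂ :=
  fun y => ∑ α, Dop m α f y

/-!
Every generator is a field `e^{i m·y} c·∂` with a constant complex direction `c`, and the
bracket of two such fields is again one:
`[e^{i m·y} c·∂, e^{i n·y} d·∂] = e^{i(m+n)·y} (i (c·n) d − i (d·m) c)·∂`,
because the second derivatives cancel by the symmetry of the Hessian. For `T̃^j` the direction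
is `e_j − e_{j+1}`, so `c·n = ñ_j`; for `T̃^N` it is `(1, …, 1)`, so `c·n = Σ_α n_α = 0`: this
is where the divergence-free constraints enter.
-/

open Complex

section WaveField

variable {N : ℕ}

def planeWave (m : Fin N → ℤ) (y : Fin N → ℝ) : ℂ :=
  exp (I * ∑ β, (m β : ℂ) * (y β : ℂ))

lemma planeWave_add (m n : Fin N → ℤ) (y : Fin N → ℝ) :
    planeWave (m + n) y = planeWave m y * planeWave n y := by
  simp only [planeWave, ← exp_add, ← mul_add, ← Finset.sum_add_distrib, Pi.add_apply]
  push_cast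
  simp only [add_mul]

lemma planeWave_eq_exp_comp (m : Fin N → ℤ) :
    planeWave m = fun y => exp ((∑ β, (I * m β) • (ofRealCLM.comp (.proj β)) :
      (Fin N → ℝ) →L[ℝ] ℂ) y) := by
  ext y
  simp [planeWave, Finset.mul_sum, mul_assoc]

lemma contDiff_planeWave (m : Fin N → ℤ) : ContDiff ℝ (⊤ : ℕ∞) (planeWave m) := by
  rw [planeWave_eq_exp_comp]
  exact contDiff_exp.comp (ContinuousLinearMap.contDiff _)

lemma fderiv_planeWave_single (m : Fin N → ℤ) (y : Fin N → ℝ) (α : Fin N) :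
    fderiv ℝ (planeWave m) y (Pi.single α 1) = I * m α * planeWave m y := by
  rw [planeWave_eq_exp_comp, ((ContinuousLinearMap.hasFDerivAt _).cexp).fderiv]
  simp [Pi.single_apply, apply_ite ofReal, mul_comm]

lemma sum_single_sub_single_mul (a b : Fin N) (v : Fin N → ℂ) :
    ∑ α, (Pi.single a 1 - Pi.single b 1 : Fin N → ℂ) α * v α = v a - v b := by
  simp [sub_mul, Finset.sum_sub_distrib, Pi.single_apply]

lemma Dop_eq_planeWave_mul (m : Fin N → ℤ) (α : Fin N) (f : (Fin N → ℝ) → ℂ) :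
    Dop m α f = fun y => planeWave m y * fderiv ℝ f y (Pi.single α 1) := rfl

variable {f : (Fin N → ℝ) → ℂ}

lemma contDiff_fderiv_apply (hf : ContDiff ℝ (⊤ : ℕ∞) f) (v : Fin N → ℝ) :
    ContDiff ℝ (⊤ : ℕ∞) (fun y => fderiv ℝ f y v) :=
  (hf.fderiv_right (m := (⊤ : ℕ∞)) (by simp)).clm_apply contDiff_const

lemma contDiff_Dop (hf : ContDiff ℝ (⊤ : ℕ∞) f) (m : Fin N → ℤ) (α : Fin N) :
    ContDiff ℝ (⊤ : ℕ∞) (Dop m α f) :=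
  (contDiff_planeWave m).mul (contDiff_fderiv_apply hf _)

lemma differentiableAt_Dop (hf : ContDiff ℝ (⊤ : ℕ∞) f) (m : Fin N → ℤ) (α : Fin N)
    (y : Fin N → ℝ) : DifferentiableAt ℝ (Dop m α f) y :=
  (contDiff_Dop hf m α).differentiable (by simp) y

lemma Dop_Dop (hf : ContDiff ℝ (⊤ : ℕ∞) f) (m n : Fin N → ℤ) (α β : Fin N) (y : Fin N → ℝ) :
    Dop m α (Dop n β f) y = planeWave m y * planeWave n y *
      (I * n α * fderiv ℝ f y (Pi.single β 1) +
        fderiv ℝ (fderiv ℝ f) y (Pi.single α 1) (Pi.single β 1)) := by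
  have hwave : DifferentiableAt ℝ (planeWave n) y :=
    (contDiff_planeWave n).differentiable (by simp) y
  have hdf : DifferentiableAt ℝ (fderiv ℝ f) y :=
    (hf.fderiv_right (m := (⊤ : ℕ∞)) (by simp)).differentiable (by simp) y
  have hpartial : fderiv ℝ (fun z => fderiv ℝ f z (Pi.single β 1)) y (Pi.single α 1) =
      fderiv ℝ (fderiv ℝ f) y (Pi.single α 1) (Pi.single β 1) := by
    rw [fderiv_clm_apply hdf (differentiableAt_const _)]
    simp
  simp only [Dop_eq_planeWave_mul]
  rw [fderiv_fun_mul hwave ((contDiff_fderiv_apply hf _).differentiable (by simp) y)]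
  simp only [add_apply, smul_apply, smul_eq_mul, hpartial, fderiv_planeWave_single]
  ring

lemma Dop_commutator (hf : ContDiff ℝ (⊤ : ℕ∞) f) (m n : Fin N → ℤ) (α β : Fin N)
    (y : Fin N → ℝ) :
    Dop m α (Dop n β f) y - Dop n β (Dop m α f) y =
      I * n α * Dop (m + n) β f y - I * m β * Dop (m + n) α f y := by
  have hsymm := hf.contDiffAt.isSymmSndFDerivAt (x := y)
    (by simpa using WithTop.coe_le_coe.mpr (le_top : (2 : ℕ∞) ≤ ⊤)) (Pi.single α 1) (Pi.single β 1)
  rw [Dop_Dop hf, Dop_Dop hf, hsymm]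
  simp only [Dop_eq_planeWave_mul, planeWave_add]
  ring

def waveField (m : Fin N → ℤ) (c : Fin N → ℂ) (f : (Fin N → ℝ) → ℂ) : (Fin N → ℝ) → ℂ :=
  fun y => ∑ α, c α * Dop m α f y

lemma Dop_waveField (hf : ContDiff ℝ (⊤ : ℕ∞) f) (m n : Fin N → ℤ) (α : Fin N)
    (d : Fin N → ℂ) (y : Fin N → ℝ) :
    Dop m α (waveField n d f) y = ∑ β, d β * Dop m α (Dop n β f) y := by
  have hterm : ∀ β ∈ Finset.univ, DifferentiableAt ℝ (fun z => d β * Dop n β f z) y :=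
    fun β _ => (differentiableAt_Dop hf n β y).const_mul _
  have hconst : ∀ β, fderiv ℝ (fun z => d β * Dop n β f z) y = d β • fderiv ℝ (Dop n β f) y :=
    fun β => fderiv_const_mul (differentiableAt_Dop hf n β y) _
  unfold waveField
  rw [Dop_eq_planeWave_mul]
  dsimp only
  rw [fderiv_fun_sum hterm]
  simp only [sum_apply, hconst, smul_apply, smul_eq_mul, Finset.mul_sum]
  exact Finset.sum_congr rfl fun _ _ => mul_left_comm _ _ _

lemma waveField_sub (m : Fin N → ℤ) (c d : Fin N → ℂ) (y : Fin N → ℝ) :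
    waveField m (c - d) f y = waveField m c f y - waveField m d f y := by
  simp only [waveField, Pi.sub_apply, sub_mul, Finset.sum_sub_distrib]

lemma waveField_smul (m : Fin N → ℤ) (a : ℂ) (c : Fin N → ℂ) (y : Fin N → ℝ) :
    waveField m (a • c) f y = a * waveField m c f y := by
  simp only [waveField, Pi.smul_apply, smul_eq_mul, mul_assoc, Finset.mul_sum]

lemma waveField_commutator (hf : ContDiff ℝ (⊤ : ℕ∞) f) (m n : Fin N → ℤ) (c d : Fin N → ℂ)
    (y : Fin N → ℝ) :
    waveField m c (waveField n d f) y - waveField n d (waveField m c f) y =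
      waveField (m + n) ((I * ∑ α, c α * n α) • d - (I * ∑ β, d β * m β) • c) f y := by
  calc waveField m c (waveField n d f) y - waveField n d (waveField m c f) y
      = ∑ α, ∑ β, c α * d β * (Dop m α (Dop n β f) y - Dop n β (Dop m α f) y) := by
        simp only [waveField, Dop_waveField hf, Finset.mul_sum, mul_sub, Finset.sum_sub_distrib]
        rw [Finset.sum_comm (f := fun β α => d β * (c α * Dop n β (Dop m α f) y))]
        simp only [mul_assoc, mul_left_comm]
    _ = ∑ α, ∑ β, (I * c α * n α * (d β * Dop (m + n) β f y) -
          I * d β * m β * (c α * Dop (m + n) α f y)) := by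
        simp only [Dop_commutator hf]
        exact Finset.sum_congr rfl fun _ _ => Finset.sum_congr rfl fun _ _ => by ring
    _ = _ := by
        simp only [waveField, Finset.sum_sub_distrib, Pi.sub_apply, Pi.smul_apply, smul_eq_mul,
          sub_mul, Finset.mul_sum, Finset.sum_mul]
        congr 1
        · rw [Finset.sum_comm]
          exact Finset.sum_congr rfl fun _ _ => Finset.sum_congr rfl fun _ _ => by ring
        · exact Finset.sum_congr rfl fun _ _ => Finset.sum_congr rfl fun _ _ => by ring

end WaveField

section Splitting

variable {M : ℕ}

lemma Tsp_eq_waveField (m : Fin (M + 1) → ℤ) (j : Fin M) (f : (Fin (M + 1) → ℝ) → ℂ) :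
    Tsp m j f = waveField m (Pi.single j.castSucc 1 - Pi.single j.succ 1) f := by
  ext y
  simp [Tsp, waveField, sub_mul, Finset.sum_sub_distrib, Pi.single_apply]

lemma Ttm_eq_waveField (m : Fin (M + 1) → ℤ) (f : (Fin (M + 1) → ℝ) → ℂ) :
    Ttm m f = waveField m 1 f := by
  ext y
  simp [Ttm, waveField]

end Splitting

theorem spatial_temporal_splitting {M : ℕ} (m n : Fin (M + 1) → ℤ)
    (hm : ∑ α, m α = 0) (hn : ∑ α, n α = 0) :
    (∀ j k : Fin M, ∀ f : (Fin (M + 1) → ℝ) → ℂ, ContDiff ℝ (⊤ : ℕ∞) f →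
      ∀ y : Fin (M + 1) → ℝ,
        Tsp m j (Tsp n k f) y - Tsp n k (Tsp m j f) y =
          -Complex.I * (((m k.castSucc - m k.succ : ℤ) : ℂ) * Tsp (m + n) j f y -
            ((n j.castSucc - n j.succ : ℤ) : ℂ) * Tsp (m + n) k f y)) ∧
    (∀ j : Fin M, ∀ f : (Fin (M + 1) → ℝ) → ℂ, ContDiff ℝ (⊤ : ℕ∞) f →
      ∀ y : Fin (M + 1) → ℝ,
        Tsp m j (Ttm n f) y - Ttm n (Tsp m j f) y =
          Complex.I * ((n j.castSucc - n j.succ : ℤ) : ℂ) * Ttm (m + n) f y) ∧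
    (∀ f : (Fin (M + 1) → ℝ) → ℂ, ContDiff ℝ (⊤ : ℕ∞) f →
      ∀ y : Fin (M + 1) → ℝ,
        Ttm m (Ttm n f) y - Ttm n (Ttm m f) y = 0) := by
  have hmC : ∑ α, (m α : ℂ) = 0 := by exact_mod_cast hm
  have hnC : ∑ α, (n α : ℂ) = 0 := by exact_mod_cast hn
  refine ⟨fun j k f hf y => ?_, fun j f hf y => ?_, fun f hf y => ?_⟩ <;>
  · simp only [Tsp_eq_waveField, Ttm_eq_waveField]
    rw [waveField_commutator hf]
    simp only [waveField_sub, waveField_smul, sum_single_sub_single_mul, Pi.one_apply, one_mul,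
      hmC, hnC]
    push_cast
    ring

end
end

section
/- Let φ : ℝ → ℂ^N be differentiable with φ(t)†φ(t) = 1 for all t, and define q^k(t) := φ(t)† J^k φ(t) for k = 1,…,N²−1 (each q^k is real-valued since J^k is Hermitian). Then for every t: Σ_{k=1}^{N²−1} ((dq^k/dt)(t))² = φ̇(t)†φ̇(t) − |φ(t)†φ̇(t)|². Equivalently, the pullback of the round metric on the q-coordinates equals the ℂP^{N−1} (Fubini–Study-type) metric η_{αβ̄} = δ_{αβ} − φ_α conj(φ_β) evaluated on φ̇, which identifies the nonlinear sigma-model Lagrangian (κ/2)Σ_k ∂q·∂q with the standard ℂP^{N−1} Lagrangian (κ/2) η_{αβ̄} ∂φ^α ∂conj(φ^β) under the constraint φ†φ = 1. -/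
/-!
STATEMENT 15: For a differentiable curve φ on the unit sphere of ℂ^N and the
coordinates q^k = φ† J^k φ built from an orthonormal basis of traceless Hermitian
matrices, Σ_k (dq^k/dt)² = φ̇†φ̇ − |φ†φ̇|²: the pullback of the round metric in the
q-coordinates is the ℂP^{N−1} (Fubini–Study) metric η_{αβ̄} = δ_{αβ} − φ_α conj(φ_β).
-/

open scoped ComplexConjugate
open Matrix

noncomputable section


namespace CP15

/-- Frobenius inner product of matrices seen as Euclidean vectors, when the first
matrix is Hermitian, equals `trace (A * B)`. -/
lemma inner_vec {N : ℕ} (A B : Matrix (Fin N) (Fin N) ℂ) (hA : Aᴴ = A) :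
    inner (𝕜 := ℂ)
      ((WithLp.equiv 2 ((Fin N × Fin N) → ℂ)).symm (fun p => A p.1 p.2))
      ((WithLp.equiv 2 ((Fin N × Fin N) → ℂ)).symm (fun p => B p.1 p.2))
      = Matrix.trace (A * B) := by
  have hconj : ∀ α β, conj (A α β) = A β α := by
    intro α β
    conv_rhs => rw [← hA]
    simp [Matrix.conjTranspose_apply]
  simp only [PiLp.inner_apply, WithLp.equiv_symm_apply, PiLp.toLp_apply, RCLike.inner_apply,
    Fintype.sum_prod_type, Matrix.trace, Matrix.diag, Matrix.mul_apply]
  rw [Finset.sum_comm]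
  simp [hconj]
  exact Finset.sum_congr rfl fun _ _ => Finset.sum_congr rfl fun _ _ => mul_comm _ _

end CP15

namespace CP15

lemma parseval (N : ℕ) (hN : 2 ≤ N)
    (J : Fin (N ^ 2 - 1) → Matrix (Fin N) (Fin N) ℂ)
    (hherm : ∀ k, (J k)ᴴ = J k)
    (htrace : ∀ k, Matrix.trace (J k) = 0)
    (hnorm : ∀ k l, Matrix.trace (J k * J l) = if k = l then (1 / 2 : ℂ) else 0)
    (X : Matrix (Fin N) (Fin N) ℂ) (hX : Xᴴ = X) (hXtr : Matrix.trace X = 0) :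
    Matrix.trace (X * X) = 2 * ∑ k, (Matrix.trace (J k * X)) ^ 2 := by
  classical
  have hNpos : (0 : ℕ) < N := lt_of_lt_of_le (by norm_num) hN
  set E := EuclideanSpace ℂ (Fin N × Fin N)
  let vec : Matrix (Fin N) (Fin N) ℂ → E :=
    fun M => (WithLp.equiv 2 ((Fin N × Fin N) → ℂ)).symm (fun p => M p.1 p.2)
  have iv : ∀ A B : Matrix (Fin N) (Fin N) ℂ, Aᴴ = A → inner ℂ (vec A) (vec B) = Matrix.trace (A * B) :=
    fun A B h => inner_vec A B h
  let c2 : ℂ := ((Real.sqrt 2 : ℝ) : ℂ)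
  let cN : ℂ := (((Real.sqrt N : ℝ) : ℂ))⁻¹
  have hc2 : c2 * c2 = 2 := by
    simp only [c2, ← Complex.ofReal_mul, Real.mul_self_sqrt (by norm_num : (0:ℝ) ≤ 2)]
    norm_num
  have hc2conj : conj c2 = c2 := Complex.conj_ofReal _
  have hcNconj : conj cN = cN := by simp [cN, ← Complex.ofReal_inv, Complex.conj_ofReal]
  have hcN : cN * cN * N = 1 := by
    have hs : (Real.sqrt N) * (Real.sqrt N) = (N : ℝ) :=
      Real.mul_self_sqrt (Nat.cast_nonneg N)
    have hNne : ((N : ℝ)) ≠ 0 := Nat.cast_ne_zero.mpr hNpos.ne'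
    have : ((Real.sqrt N : ℝ) : ℂ) * ((Real.sqrt N : ℝ) : ℂ) = (N : ℂ) := by
      rw [← Complex.ofReal_mul, hs]; simp
    simp only [cN, ← mul_inv, this]
    exact inv_mul_cancel₀ (by exact_mod_cast hNne)
  let v : Option (Fin (N ^ 2 - 1)) → E := fun o =>
    Option.elim o (cN • vec 1) (fun k => c2 • vec (J k))
  have hone : ((1 : Matrix (Fin N) (Fin N) ℂ))ᴴ = 1 := Matrix.conjTranspose_one
  have htr1 : Matrix.trace (1 : Matrix (Fin N) (Fin N) ℂ) = (N : ℂ) := by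
    simp [Matrix.trace_one]
  -- orthonormality
  have horth : Orthonormal ℂ v := by
    rw [orthonormal_iff_ite]
    rintro (_ | k) (_ | l)
    · simp only [v, Option.elim, inner_smul_left, inner_smul_right, hcNconj,
        iv 1 1 hone, Matrix.one_mul, htr1]
      simp only [if_true]
      rw [← mul_assoc]; exact hcN
    · simp only [v, Option.elim, inner_smul_left, inner_smul_right, hcNconj,
        iv 1 (J l) hone, Matrix.one_mul, htrace l]
      simp
    · simp only [v, Option.elim, inner_smul_left, inner_smul_right, hc2conj,
        iv (J k) 1 (hherm k), Matrix.mul_one, htrace k]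
      simp
    · simp only [v, Option.elim, inner_smul_left, inner_smul_right, hc2conj,
        iv (J k) (J l) (hherm k), hnorm k l]
      by_cases h : k = l
      · subst h
        simp [← mul_assoc, hc2]
      · simp [h, Option.some.injEq]
  -- cardinality
  have hcard : Module.finrank ℂ E = Fintype.card (Option (Fin (N ^ 2 - 1))) := by
    have h1 : Module.finrank ℂ E = N * N := by simp [E]
    have h2 : Fintype.card (Option (Fin (N ^ 2 - 1))) = N ^ 2 - 1 + 1 := by simp
    have h3 : N ^ 2 = N * N := sq N
    have h5 : 1 ≤ N ^ 2 := Nat.one_le_pow _ _ hNpos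
    rw [h1, h2, ← h3]
    omega
  have huniv : Orthonormal ℂ ((Set.univ : Set (Option (Fin (N ^ 2 - 1)))).restrict v) :=
    horth.comp _ Subtype.val_injective
  obtain ⟨b, hb⟩ := huniv.exists_orthonormalBasis_extension_of_card_eq hcard
  have hb' : ∀ i, b i = v i := fun i => hb i (Set.mem_univ i)
  have hpar := b.sum_inner_mul_inner (vec X) (vec X)
  simp only [hb'] at hpar
  rw [Fintype.sum_option] at hpar
  have hXvec : inner (𝕜 := ℂ) (vec X) (vec X) = Matrix.trace (X * X) := inner_vec X X hX
  have hnone : inner (𝕜 := ℂ) (v none) (vec X) = 0 := by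
    simp only [v, Option.elim, inner_smul_left, hcNconj, iv 1 X hone,
      Matrix.one_mul, hXtr, mul_zero]
  have hsome : ∀ k, inner (𝕜 := ℂ) (vec X) (v (some k)) * inner (𝕜 := ℂ) (v (some k)) (vec X)
      = 2 * (Matrix.trace (J k * X)) ^ 2 := by
    intro k
    have h1 : inner (𝕜 := ℂ) (vec X) (v (some k)) = c2 * Matrix.trace (J k * X) := by
      simp only [v, Option.elim, inner_smul_right, iv X (J k) hX,
        Matrix.trace_mul_comm X (J k)]
    have h2 : inner (𝕜 := ℂ) (v (some k)) (vec X) = c2 * Matrix.trace (J k * X) := by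
      simp only [v, Option.elim, inner_smul_left, hc2conj, iv (J k) X (hherm k)]
    rw [h1, h2]
    calc c2 * Matrix.trace (J k * X) * (c2 * Matrix.trace (J k * X))
        = (c2 * c2) * (Matrix.trace (J k * X)) ^ 2 := by ring
      _ = 2 * (Matrix.trace (J k * X)) ^ 2 := by rw [hc2]
  rw [hnone, mul_zero, hXvec] at hpar
  rw [← hpar]
  rw [zero_add, Finset.mul_sum]
  exact Finset.sum_congr rfl fun k _ => hsome k

end CP15

namespace CP15

theorem cp_sigma_model_metric' (N : ℕ) (hN : 2 ≤ N)
    (J : Fin (N ^ 2 - 1) → Matrix (Fin N) (Fin N) ℂ)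
    (hherm : ∀ k, (J k)ᴴ = J k)
    (htrace : ∀ k, Matrix.trace (J k) = 0)
    (hnorm : ∀ k l, Matrix.trace (J k * J l) = if k = l then (1 / 2 : ℂ) else 0)
    (φ : ℝ → (Fin N → ℂ)) (hφ : Differentiable ℝ φ)
    (hunit : ∀ t, ∑ α, conj (φ t α) * φ t α = 1) (t : ℝ) :
    ∑ k, (deriv (fun s => ∑ α, ∑ β, conj (φ s α) * J k α β * φ s β) t) ^ 2 =
      (∑ α, conj (deriv φ t α) * deriv φ t α) -
        conj (∑ α, conj (φ t α) * deriv φ t α) * (∑ α, conj (φ t α) * deriv φ t α) := by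
  classical
  -- coordinate derivatives
  have hcoord : ∀ (s : ℝ) (α : Fin N), HasDerivAt (fun u => φ u α) (deriv φ s α) s := by
    intro s α
    have h := (hφ s).hasDerivAt
    exact (ContinuousLinearMap.proj (R := ℝ) (φ := fun _ : Fin N => ℂ) α).hasFDerivAt.comp_hasDerivAt s h
  have hconjcoord : ∀ (s : ℝ) (α : Fin N),
      HasDerivAt (fun u => conj (φ u α)) (conj (deriv φ s α)) s := by
    intro s α
    simpa only [RCLike.star_def] using (hcoord s α).star
  set Dφ := deriv φ t with hDφdef
  -- the tangent matrix X
  set X : Matrix (Fin N) (Fin N) ℂ :=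
    Matrix.of (fun α β => Dφ α * conj (φ t β) + φ t α * conj (Dφ β)) with hXdef
  have hXapp : ∀ α β, X α β = Dφ α * conj (φ t β) + φ t α * conj (Dφ β) := fun _ _ => rfl
  -- unit-norm constraint: a + conj a = 0
  set a : ℂ := ∑ α, conj (φ t α) * Dφ α with hadef
  have hconstr : conj a + a = 0 := by
    have hderiv : HasDerivAt (fun s => ∑ α, conj (φ s α) * φ s α)
        (∑ α, (conj (Dφ α) * φ t α + conj (φ t α) * Dφ α)) t := by
      apply HasDerivAt.fun_sum
      intro α _
      exact (hconjcoord t α).mul (hcoord t α)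
    have hconst : HasDerivAt (fun s => ∑ α, conj (φ s α) * φ s α) 0 t := by
      have : (fun s : ℝ => ∑ α, conj (φ s α) * φ s α) = fun _ => (1 : ℂ) :=
        funext fun s => hunit s
      rw [this]
      exact hasDerivAt_const t 1
    have := hderiv.unique hconst
    rw [← this, hadef, map_sum, Finset.sum_add_distrib.symm]
    congr 1
    ext α
    simp [mul_comm]
  -- X is Hermitian
  have hXherm : Xᴴ = X := by
    ext α β
    simp only [Matrix.conjTranspose_apply, hXapp]
    simp [mul_comm, add_comm]
  -- X is traceless
  have hXtr : Matrix.trace X = 0 := by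
    have : Matrix.trace X = a + conj a := by
      simp only [Matrix.trace, Matrix.diag, hXapp, Finset.sum_add_distrib, hadef, map_sum]
      congr 1
      · exact Finset.sum_congr rfl fun α _ => mul_comm _ _
      · exact Finset.sum_congr rfl fun α _ => by simp [mul_comm]
    rw [this, add_comm, hconstr]
  -- the derivative of q^k equals trace (J k * X)
  have hq : ∀ k, deriv (fun s => ∑ α, ∑ β, conj (φ s α) * J k α β * φ s β) t
      = Matrix.trace (J k * X) := by
    intro k
    have hder : HasDerivAt (fun s => ∑ α, ∑ β, conj (φ s α) * J k α β * φ s β)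
        (∑ α, ∑ β, (conj (Dφ α) * J k α β * φ t β + conj (φ t α) * J k α β * Dφ β)) t := by
      apply HasDerivAt.fun_sum; intro α _
      apply HasDerivAt.fun_sum; intro β _
      simpa [mul_assoc] using ((hconjcoord t α).mul_const (J k α β)).fun_mul (hcoord t β)
    rw [hder.deriv]
    simp only [Matrix.trace, Matrix.diag, Matrix.mul_apply, hXapp, Finset.mul_sum]
    apply Finset.sum_congr rfl; intro α _
    apply Finset.sum_congr rfl; intro β _
    ring
  -- rewrite LHS via trace (J k * X)
  have hLHS : ∑ k, (deriv (fun s => ∑ α, ∑ β, conj (φ s α) * J k α β * φ s β) t) ^ 2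
      = ∑ k, (Matrix.trace (J k * X)) ^ 2 :=
    Finset.sum_congr rfl fun k _ => by rw [hq k]
  have hpar := parseval N hN J hherm htrace hnorm X hXherm hXtr
  have hhalf : ∑ k, (Matrix.trace (J k * X)) ^ 2 = (1 / 2 : ℂ) * Matrix.trace (X * X) := by
    rw [hpar]; ring
  -- expand trace (X * X)
  set n : ℂ := ∑ α, conj (Dφ α) * Dφ α with hndef
  have htr2 : Matrix.trace (X * X) = ∑ α, ∑ β, X α β * X β α := by
    simp [Matrix.trace, Matrix.diag, Matrix.mul_apply]
  have hinner : ∀ α, ∑ β, X α β * X β α =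
      (Dφ α * conj (φ t α)) * (∑ β, conj (φ t β) * Dφ β)
      + (Dφ α * conj (Dφ α)) * (∑ β, conj (φ t β) * φ t β)
      + (φ t α * conj (φ t α)) * (∑ β, conj (Dφ β) * Dφ β)
      + (φ t α * conj (Dφ α)) * (∑ β, conj (Dφ β) * φ t β) := by
    intro α
    rw [Finset.mul_sum, Finset.mul_sum, Finset.mul_sum, Finset.mul_sum,
      ← Finset.sum_add_distrib, ← Finset.sum_add_distrib, ← Finset.sum_add_distrib]
    exact Finset.sum_congr rfl fun β _ => by simp only [hXapp]; ring
  have hXX : Matrix.trace (X * X) = a * a + n * 1 + 1 * n + conj a * conj a := by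
    rw [htr2]
    simp only [hinner]
    rw [Finset.sum_add_distrib, Finset.sum_add_distrib, Finset.sum_add_distrib,
      ← Finset.sum_mul, ← Finset.sum_mul, ← Finset.sum_mul, ← Finset.sum_mul]
    have e1 : ∑ α, Dφ α * conj (φ t α) = a := by
      rw [hadef]; exact Finset.sum_congr rfl fun α _ => mul_comm _ _
    have e2 : ∑ β, conj (φ t β) * Dφ β = a := hadef.symm
    have e3 : ∑ α, Dφ α * conj (Dφ α) = n := by
      rw [hndef]; exact Finset.sum_congr rfl fun α _ => mul_comm _ _
    have e4 : ∑ β, conj (φ t β) * φ t β = 1 := hunit t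
    have e5 : ∑ α, φ t α * conj (φ t α) = 1 := by
      rw [← hunit t]; exact Finset.sum_congr rfl fun α _ => mul_comm _ _
    have e6 : ∑ β, conj (Dφ β) * Dφ β = n := hndef.symm
    have e7 : ∑ α, φ t α * conj (Dφ α) = conj a := by
      rw [hadef, map_sum]
      exact Finset.sum_congr rfl fun α _ => by simp [mul_comm]
    have e8 : ∑ β, conj (Dφ β) * φ t β = conj a := by
      rw [hadef, map_sum]
      exact Finset.sum_congr rfl fun α _ => by simp [mul_comm]
    rw [e1, e2, e3, e4, e5, e6, e7, e8]
  rw [hLHS, hhalf, hXX]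
  linear_combination ((1 / 2 : ℂ) * (conj a + a)) * hconstr

end CP15



theorem cp_sigma_model_metric (N : ℕ) (hN : 2 ≤ N)
    (J : Fin (N ^ 2 - 1) → Matrix (Fin N) (Fin N) ℂ)
    (hherm : ∀ k, (J k)ᴴ = J k)
    (htrace : ∀ k, Matrix.trace (J k) = 0)
    (hnorm : ∀ k l, Matrix.trace (J k * J l) = if k = l then (1 / 2 : ℂ) else 0)
    (φ : ℝ → (Fin N → ℂ)) (hφ : Differentiable ℝ φ)
    (hunit : ∀ t, ∑ α, conj (φ t α) * φ t α = 1) (t : ℝ) :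
    ∑ k, (deriv (fun s => ∑ α, ∑ β, conj (φ s α) * J k α β * φ s β) t) ^ 2 =
      (∑ α, conj (deriv φ t α) * deriv φ t α) -
        conj (∑ α, conj (φ t α) * deriv φ t α) * (∑ α, conj (φ t α) * deriv φ t α) := by
  exact CP15.cp_sigma_model_metric' N hN J hherm htrace hnorm φ hφ hunit t
end
end
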